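/- arXiv:2208.07533 — 7 statements merged into one kernel-verified Lean document; each statement's English description precedes it below -/
import Mathlib

section
/- If a risk sharing rule A satisfies Property UI (universal improvement), then A satisfies Axioms AF and RF, and also Property CP (constant preserving): for every X ∈ 𝒳ⁿ and every i, if Xᵢ = x a.s. for some x ∈ ℝ, then Aᵢ^X = x a.s. -/
/-!
Everything is read off from test functions. The convex order against `t ↦ t` and `t ↦ -t`
gives equal means (AF). For a convex `u ≥ 0` with `u(Xᵢ) = 0` a.s., `E[u(Aᵢ^X)] ≤ E[u(Xᵢ)] = 0`
forces `u(Aᵢ^X) = 0` a.s.; with `u(t) = (t - m)⁺` for every real bound `m ≥ Xᵢ` this gives RF,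
and with `u(t) = |t - x|` it gives CP.
-/

open MeasureTheory

noncomputable section

/-- Convex order: X ≤_cx Y iff E[u(X)] ≤ E[u(Y)] for every convex function u : ℝ → ℝ
such that both u(X) and u(Y) are integrable. -/
def CxLE {Ω : Type*} [MeasurableSpace Ω] (μ : MeasureTheory.Measure Ω)
    (X Y : Ω → ℝ) : Prop :=
  ∀ u : ℝ → ℝ, ConvexOn ℝ Set.univ u →
    MeasureTheory.Integrable (fun ω => u (X ω)) μ →
    MeasureTheory.Integrable (fun ω => u (Y ω)) μ →
    ∫ ω, u (X ω) ∂μ ≤ ∫ ω, u (Y ω) ∂μ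

section ConvexOrder

variable {Ω : Type*} [MeasurableSpace Ω] {μ : Measure Ω} {X Y : Ω → ℝ}

theorem CxLE.integral_eq (h : CxLE μ X Y) (hX : Integrable X μ) (hY : Integrable Y μ) :
    ∫ ω, X ω ∂μ = ∫ ω, Y ω ∂μ := by
  have hid := h id (convexOn_id convex_univ) hX hY
  have hneg := h (fun t => -t) (concaveOn_id convex_univ).neg hX.neg hY.neg
  simp only [id, integral_neg, neg_le_neg_iff] at hid hneg
  exact le_antisymm hid hneg

theorem CxLE.ae_comp_eq_zero (h : CxLE μ X Y) {u : ℝ → ℝ} (hu : ConvexOn ℝ Set.univ u)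
    (hu_nonneg : ∀ t, 0 ≤ u t) (huX : Integrable (fun ω => u (X ω)) μ)
    (huY : (fun ω => u (Y ω)) =ᵐ[μ] 0) : (fun ω => u (X ω)) =ᵐ[μ] 0 := by
  have hle : ∫ ω, u (X ω) ∂μ ≤ 0 := by
    simpa [integral_congr_ae huY] using h u hu huX ((integrable_zero _ _ μ).congr huY.symm)
  exact (integral_eq_zero_iff_of_nonneg (fun ω => hu_nonneg _) huX).mp
    (le_antisymm hle (integral_nonneg fun ω => hu_nonneg _))

variable [IsFiniteMeasure μ]

theorem CxLE.ae_le_of_ae_le (h : CxLE μ X Y) (hX : Integrable X μ) {c : ℝ}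
    (hY : ∀ᵐ ω ∂μ, Y ω ≤ c) : ∀ᵐ ω ∂μ, X ω ≤ c := by
  have hu : ConvexOn ℝ Set.univ (fun t => max (t - c) 0) :=
    ((convexOn_id convex_univ).sub (concaveOn_const c convex_univ)).sup
      (convexOn_const 0 convex_univ)
  have key := h.ae_comp_eq_zero hu (fun t => le_max_right _ _)
    (hX.sub (integrable_const c)).pos_part (by filter_upwards [hY] with ω hω; simpa using hω)
  filter_upwards [key] with ω hω
  simpa using hω

theorem CxLE.ae_eq_const (h : CxLE μ X Y) (hX : Integrable X μ) {c : ℝ}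
    (hY : Y =ᵐ[μ] fun _ => c) : X =ᵐ[μ] fun _ => c := by
  have hu : ConvexOn ℝ Set.univ (fun t => |t - c|) := by
    simpa [Function.comp_def, sub_eq_add_neg] using
      (convexOn_univ_norm (E := ℝ)).translate_left (-c)
  have key := h.ae_comp_eq_zero hu (fun t => abs_nonneg _)
    (hX.sub (integrable_const c)).abs (by filter_upwards [hY] with ω hω; simp [hω])
  filter_upwards [key] with ω hω
  simpa [sub_eq_zero] using hω

end ConvexOrder

theorem ae_le_essSup_of_forall_ae_le {Ω : Type*} [MeasurableSpace Ω] {μ : Measure Ω}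
    {f g : Ω → ℝ} (h : ∀ c : ℝ, (∀ᵐ ω ∂μ, g ω ≤ c) → ∀ᵐ ω ∂μ, f ω ≤ c) :
    ∀ᵐ ω ∂μ, (f ω : EReal) ≤ essSup (fun ω => (g ω : EReal)) μ := by
  have hess : essSup (fun ω => (f ω : EReal)) μ ≤ essSup (fun ω => (g ω : EReal)) μ := by
    refine EReal.le_of_forall_lt_iff_le.mp fun c hc => essSup_le_of_ae_le (c : EReal) ?_
    have hg : ∀ᵐ ω ∂μ, g ω ≤ c := by
      filter_upwards [ae_le_essSup (f := fun ω => (g ω : EReal))] with ω hω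
      exact EReal.coe_le_coe_iff.mp (hω.trans hc.le)
    filter_upwards [h c hg] with ω hω
    exact EReal.coe_le_coe_iff.mpr hω
  filter_upwards [ae_le_essSup (f := fun ω => (f ω : EReal))] with ω hω
  exact hω.trans hess

theorem ui_implies_af_rf_cp_general
    {Ω : Type*} [MeasurableSpace Ω] {μ : Measure Ω} [IsProbabilityMeasure μ]
    {n : ℕ}
    -- a risk sharing rule: a map 𝒳ⁿ → 𝒳ⁿ whose components sum to the total risk
    (A : (Fin n → Lp ℝ 1 μ) → (Fin n → Lp ℝ 1 μ))
    -- Property UI: Aᵢ^X ≤_cx Xᵢ for every X and i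
    (hUI : ∀ X (i : Fin n), CxLE μ (A X i : Ω → ℝ) (X i : Ω → ℝ)) :
    -- Axiom AF
    (∀ X (i : Fin n), ∫ ω, (A X i : Ω → ℝ) ω ∂μ = ∫ ω, (X i : Ω → ℝ) ω ∂μ) ∧
    -- Axiom RF
    (∀ X (i : Fin n), ∀ᵐ ω ∂μ, ((A X i : Ω → ℝ) ω : EReal)
        ≤ essSup (fun ω' => ((X i : Ω → ℝ) ω' : EReal)) μ) ∧
    -- Property CP: if Xᵢ = x a.s. for a constant x, then Aᵢ^X = x a.s.
    (∀ X (i : Fin n) (x : ℝ), (X i : Ω → ℝ) =ᵐ[μ] (fun _ => x) →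
        (A X i : Ω → ℝ) =ᵐ[μ] fun _ => x) := by
  have hint (f : Lp ℝ 1 μ) : Integrable (f : Ω → ℝ) μ := L1.integrable_coeFn f
  exact ⟨fun X i => (hUI X i).integral_eq (hint _) (hint _),
    fun X i => ae_le_essSup_of_forall_ae_le fun _ => (hUI X i).ae_le_of_ae_le (hint _),
    fun X i _ => (hUI X i).ae_eq_const (hint _)⟩

/-- if a risk sharing rule satisfies Property UI (universal improvement),
then it satisfies Axioms AF and RF, and Property CP (constant preserving). -/
theorem ui_implies_af_rf_cp
    {Ω : Type*} [MeasurableSpace Ω] {μ : Measure Ω} [IsProbabilityMeasure μ]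
    {n : ℕ} (hn : 3 ≤ n)
    -- a risk sharing rule: a map 𝒳ⁿ → 𝒳ⁿ whose components sum to the total risk
    (A : (Fin n → Lp ℝ 1 μ) → (Fin n → Lp ℝ 1 μ))
    (hsum : ∀ X, ∑ i, A X i = ∑ i, X i)
    -- Property UI: Aᵢ^X ≤_cx Xᵢ for every X and i
    (hUI : ∀ X (i : Fin n), CxLE μ (A X i : Ω → ℝ) (X i : Ω → ℝ)) :
    -- Axiom AF
    (∀ X (i : Fin n), ∫ ω, (A X i : Ω → ℝ) ω ∂μ = ∫ ω, (X i : Ω → ℝ) ω ∂μ) ∧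
    -- Axiom RF
    (∀ X (i : Fin n), ∀ᵐ ω ∂μ, ((A X i : Ω → ℝ) ω : EReal)
        ≤ essSup (fun ω' => ((X i : Ω → ℝ) ω' : EReal)) μ) ∧
    -- Property CP: if Xᵢ = x a.s. for a constant x, then Aᵢ^X = x a.s.
    (∀ X (i : Fin n) (x : ℝ), (X i : Ω → ℝ) =ᵐ[μ] (fun _ => x) →
        (A X i : Ω → ℝ) =ᵐ[μ] fun _ => x) :=
  ui_implies_af_rf_cp_general A hUI
end
end

section
/- If a risk sharing rule satisfies Axiom OA and Property ZP, then it satisfies Property SM (symmetry): for every X ∈ 𝒳ⁿ and every permutation π of {1,…,n}, the i-th component of A^{X_π} equals A_{π(i)}^X a.s. for every i, where X_π = (X_{π(1)}, …, X_{π(n)}). -/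
/-!
Merging agent `j` into agent `i` leaves the other agents' allocations unchanged (OA), gives `j`
nothing (ZP), and preserves the aggregate, so `i` receives `A_i^X + A_j^X`. For a transposition
`(a b)` and a third agent `c`, merging `b` into `c` and then `a` into `b` yields the same position
as swapping `a, b` and merging `a` into `c`; reading off agent `b` shows that `b` receives after the
swap what `a` received before. Agents other than `a, b` are unaffected, since merging `b` into `a`
erases the swap. Symmetry under all permutations follows by induction on transpositions.
-/

open MeasureTheory Finset Function

namespace RiskSharing

variable {ι M : Type*} [DecidableEq ι]

section Merge

variable [AddCommMonoid M]

def merge (X : ι → M) (i j : ι) : ι → M :=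
  update (update X i (X i + X j)) j 0

@[simp]
theorem merge_apply_right (X : ι → M) (i j : ι) : merge X i j j = 0 :=
  update_self _ _ _

@[simp]
theorem merge_apply_left {i j : ι} (X : ι → M) (hij : i ≠ j) : merge X i j i = X i + X j := by
  rw [merge, update_of_ne hij, update_self]

theorem merge_apply_of_ne {i j k : ι} (X : ι → M) (hki : k ≠ i) (hkj : k ≠ j) :
    merge X i j k = X k := by
  rw [merge, update_of_ne hkj, update_of_ne hki]

theorem sum_merge [Fintype ι] {i j : ι} (X : ι → M) (hij : i ≠ j) :
    ∑ k, merge X i j k = ∑ k, X k := by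
  rw [← sum_erase_add _ _ (mem_univ j), ← sum_erase_add _ _ (mem_erase.2 ⟨hij, mem_univ i⟩),
    ← sum_erase_add _ _ (mem_univ j), ← sum_erase_add _ _ (mem_erase.2 ⟨hij, mem_univ i⟩),
    merge_apply_left X hij, merge_apply_right, add_zero, add_assoc]
  congr 1
  refine sum_congr rfl fun k hk => ?_
  obtain ⟨hki, hkj⟩ : k ≠ i ∧ k ≠ j := by simpa using hk
  exact merge_apply_of_ne X hki hkj

theorem merge_comp_swap {a b : ι} (X : ι → M) : merge (X ∘ Equiv.swap a b) a b = merge X a b := by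
  ext k
  rcases eq_or_ne k b with rfl | hkb
  · simp
  rcases eq_or_ne k a with rfl | hka
  · simp [merge_apply_left _ hkb, add_comm]
  · simp [merge_apply_of_ne _ hka hkb, Equiv.swap_apply_of_ne_of_ne hka hkb]

theorem merge_merge_eq_merge_comp_swap {a b c : ι} (X : ι → M) (hab : a ≠ b) (hca : c ≠ a)
    (hcb : c ≠ b) : merge (merge X c b) b a = merge (X ∘ Equiv.swap a b) c a := by
  ext k
  by_cases hka : k = a
  · simp [hka]
  by_cases hkb : k = b
  · rw [hkb, merge_apply_left _ hab.symm, merge_apply_right, merge_apply_of_ne _ hca.symm hab,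
      zero_add, merge_apply_of_ne _ hcb.symm hab.symm, comp_apply, Equiv.swap_apply_right]
  by_cases hkc : k = c
  · rw [hkc, merge_apply_of_ne _ hcb hca, merge_apply_left _ hcb, merge_apply_left _ hca,
      comp_apply, comp_apply, Equiv.swap_apply_of_ne_of_ne hca hcb, Equiv.swap_apply_left]
  rw [merge_apply_of_ne _ hkb hka, merge_apply_of_ne _ hkc hkb, merge_apply_of_ne _ hkc hka,
    comp_apply, Equiv.swap_apply_of_ne_of_ne hka hkb]

end Merge

section Rule

variable [AddCommGroup M] (A : (ι → M) → ι → M)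

def IsBalanced [Fintype ι] : Prop :=
  ∀ X, ∑ i, A X i = ∑ i, X i

def IsOperationallyAnonymous : Prop :=
  ∀ X i j, i ≠ j → ∀ k, k ≠ i → k ≠ j → A (merge X i j) k = A X k

def IsZeroPreserving : Prop :=
  ∀ X i, X i = 0 → A X i = 0

variable {A}

theorem apply_merge_left [Fintype ι] (hsum : IsBalanced A) (hOA : IsOperationallyAnonymous A)
    (hZP : IsZeroPreserving A) {i j : ι} (X : ι → M) (hij : i ≠ j) :
    A (merge X i j) i = A X i + A X j := by
  have hdiff : ∑ k, (A (merge X i j) k - A X k) = (A (merge X i j) i - A X i) + (0 - A X j) := by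
    rw [Fintype.sum_eq_add i j hij fun k hk => sub_eq_zero.2 (hOA X i j hij k hk.1 hk.2),
      hZP _ j (merge_apply_right X i j)]
  rw [sum_sub_distrib, hsum, hsum, sum_merge X hij, sub_self, zero_sub,
    ← sub_eq_add_neg, sub_sub, eq_comm, sub_eq_zero] at hdiff
  exact hdiff

theorem apply_comp_swap_of_ne (hOA : IsOperationallyAnonymous A) {a b i : ι} (X : ι → M)
    (hab : a ≠ b) (hia : i ≠ a) (hib : i ≠ b) : A (X ∘ Equiv.swap a b) i = A X i := by
  rw [← hOA _ a b hab i hia hib, merge_comp_swap, hOA X a b hab i hia hib]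

theorem apply_comp_swap_right [Fintype ι] (hsum : IsBalanced A) (hOA : IsOperationallyAnonymous A)
    (hZP : IsZeroPreserving A) {a b c : ι} (X : ι → M) (hab : a ≠ b) (hca : c ≠ a)
    (hcb : c ≠ b) : A (X ∘ Equiv.swap a b) b = A X a := by
  calc A (X ∘ Equiv.swap a b) b
      = A (merge (X ∘ Equiv.swap a b) c a) b := (hOA _ c a hca b hcb.symm hab.symm).symm
    _ = A (merge (merge X c b) b a) b := by rw [merge_merge_eq_merge_comp_swap X hab hca hcb]
    _ = A (merge X c b) b + A (merge X c b) a := apply_merge_left hsum hOA hZP _ hab.symm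
    _ = A X a := by rw [hZP _ b (merge_apply_right X c b), hOA X c b hcb a hca.symm hab, zero_add]

theorem apply_comp_swap [Fintype ι] (hcard : 2 < Fintype.card ι) (hsum : IsBalanced A)
    (hOA : IsOperationallyAnonymous A) (hZP : IsZeroPreserving A) {a b : ι} (X : ι → M)
    (hab : a ≠ b) (i : ι) : A (X ∘ Equiv.swap a b) i = A X (Equiv.swap a b i) := by
  obtain ⟨c, -, hc⟩ := exists_mem_notMem_of_card_lt_card (s := {a, b}) (t := univ)
    ((card_le_two).trans_lt hcard)
  obtain ⟨hca, hcb⟩ : c ≠ a ∧ c ≠ b := by simpa using hc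
  rcases eq_or_ne i a with rfl | hia
  · rw [Equiv.swap_apply_left, Equiv.swap_comm]
    exact apply_comp_swap_right hsum hOA hZP X hab.symm hcb hca
  rcases eq_or_ne i b with rfl | hib
  · rw [Equiv.swap_apply_right]
    exact apply_comp_swap_right hsum hOA hZP X hab hca hcb
  rw [Equiv.swap_apply_of_ne_of_ne hia hib]
  exact apply_comp_swap_of_ne hOA X hab hia hib

theorem apply_comp_perm [Fintype ι] (hcard : 2 < Fintype.card ι) (hsum : IsBalanced A)
    (hOA : IsOperationallyAnonymous A) (hZP : IsZeroPreserving A) (π : Equiv.Perm ι)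
    (X : ι → M) (i : ι) : A (X ∘ π) i = A X (π i) := by
  induction π using Equiv.Perm.swap_induction_on generalizing X with
  | one => simp
  | swap_mul σ a b hab ih =>
    rw [Equiv.Perm.coe_mul, ← comp_assoc, ih, apply_comp_swap hcard hsum hOA hZP X hab,
      comp_apply]

end Rule

end RiskSharing

theorem oa_zp_imply_symmetry_general
    {Ω : Type*} [MeasurableSpace Ω] {μ : Measure Ω}
    {n : ℕ} (hn : 3 ≤ n)
    (A : (Fin n → Lp ℝ 1 μ) → (Fin n → Lp ℝ 1 μ))
    (hsum : ∀ X, ∑ i, A X i = ∑ i, X i)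
    -- Axiom OA
    (hOA : ∀ X (i j : Fin n), i ≠ j → ∀ k, k ≠ i → k ≠ j →
        A (Function.update (Function.update X i (X i + X j)) j 0) k = A X k)
    -- Property ZP
    (hZP : ∀ X (i : Fin n), X i = 0 → A X i = 0) :
    -- Property SM
    ∀ X (π : Equiv.Perm (Fin n)) (i : Fin n), A (fun k => X (π k)) i = A X (π i) :=
  fun X π i => RiskSharing.apply_comp_perm (by rwa [Fintype.card_fin]) hsum hOA hZP π X i

/-- if a risk sharing rule satisfies Axiom OA and Property ZP, then it
satisfies Property SM (symmetry): for every permutation π, the i-th component of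
A^{X_π} equals A_{π(i)}^X. -/
theorem oa_zp_imply_symmetry
    {Ω : Type*} [MeasurableSpace Ω] {μ : Measure Ω} [IsProbabilityMeasure μ]
    {n : ℕ} (hn : 3 ≤ n)
    (A : (Fin n → Lp ℝ 1 μ) → (Fin n → Lp ℝ 1 μ))
    (hsum : ∀ X, ∑ i, A X i = ∑ i, X i)
    -- Axiom OA
    (hOA : ∀ X (i j : Fin n), i ≠ j → ∀ k, k ≠ i → k ≠ j →
        A (Function.update (Function.update X i (X i + X j)) j 0) k = A X k)
    -- Property ZP
    (hZP : ∀ X (i : Fin n), X i = 0 → A X i = 0) :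
    -- Property SM
    ∀ X (π : Equiv.Perm (Fin n)) (i : Fin n), A (fun k => X (π k)) i = A X (π i) :=
  oa_zp_imply_symmetry_general hn A hsum hOA hZP
end

section
/- Fix a nonnegative integrable random variable S on (Ω, 𝓕, ℙ) and let B_S = {X ∈ L¹₊ : X ≤ S a.s.}. Any additive function φ : B_S → L¹₊ (i.e., φ(X + Y) = φ(X) + φ(Y) whenever X, Y, X + Y ∈ B_S) has a unique additive extension to the cone C_S = {λX : λ ≥ 0, X ∈ B_S} and a unique linear extension to the linear span of B_S. -/
/-!
An additive map `φ ≥ 0` on `B_S = Icc 0 S` is monotone, so for `Z ∈ B_S` the map `t ↦ φ (t • Z)` is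
monotone and additive on `[0, 1]`. Additivity makes it `ℚ`-homogeneous, and squeezing between
rationals in the closed order of `L¹` makes it `ℝ`-homogeneous. Hence `ψ (c • Z) := c • φ Z` is a
well defined additive extension to `C_S`. Every element of the span of `B_S` is a difference of two
elements of `C_S`, and `X - Y ↦ ψ X - ψ Y` is a well defined linear map on it. Uniqueness holds
because every element of `C_S` is a natural multiple of an element of `B_S`, and `B_S` spans.
-/

open MeasureTheory

noncomputable section

open Set Submodule

instance {Ω : Type*} [MeasurableSpace Ω] {μ : Measure Ω} {p : ENNReal} :
    IsOrderedModule ℝ (Lp ℝ p μ) :=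
  IsOrderedModule.of_smul_nonneg fun c hc f hf => by
    rw [← Lp.coeFn_nonneg] at hf ⊢
    filter_upwards [hf, Lp.coeFn_smul c f] with ω hfω hcf
    rw [hcf]
    exact mul_nonneg hc hfω

def AdditiveOn {E F : Type*} [Add E] [Add F] (f : E → F) (s : Set E) : Prop :=
  ∀ x ∈ s, ∀ y ∈ s, x + y ∈ s → f (x + y) = f x + f y

namespace AdditiveOn

variable {E F : Type*} [AddCommGroup E] [AddCommGroup F] {f : E → F} {s : Set E}

theorem map_zero (hf : AdditiveOn f s) (h0 : 0 ∈ s) : f 0 = 0 := by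
  simpa using hf 0 h0 0 h0 (by simpa using h0)

theorem map_nsmul (hf : AdditiveOn f s) {x : E} {n : ℕ} (hx : ∀ m ≤ n, m • x ∈ s) :
    f (n • x) = n • f x := by
  induction n with
  | zero => simpa using hf.map_zero (by simpa using hx 0 le_rfl)
  | succ n ih =>
    have hx' : ∀ m ≤ n, m • x ∈ s := fun m hm => hx m (hm.trans n.le_succ)
    rw [succ_nsmul, hf _ (hx' n le_rfl) _ (by simpa using hx 1 (by omega)) (by
      simpa [succ_nsmul] using hx (n + 1) le_rfl), ih hx', succ_nsmul]

theorem sub_eq_sub (hf : AdditiveOn f s) (hs : ∀ x ∈ s, ∀ y ∈ s, x + y ∈ s) {x y x' y' : E}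
    (hx : x ∈ s) (hy : y ∈ s) (hx' : x' ∈ s) (hy' : y' ∈ s) (h : x - y = x' - y') :
    f x - f y = f x' - f y' := by
  rw [sub_eq_sub_iff_add_eq_add] at h ⊢
  rw [← hf x hx y' hy' (hs x hx y' hy'), ← hf x' hx' y hy (hs x' hx' y hy), h]

theorem monotoneOn_Icc_zero [PartialOrder E] [IsOrderedAddMonoid E] [PartialOrder F]
    [IsOrderedAddMonoid F] {S : E} (hf : AdditiveOn f (Icc 0 S)) (hpos : ∀ x ∈ Icc 0 S, 0 ≤ f x) :
    MonotoneOn f (Icc 0 S) := by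
  intro x hx y hy hxy
  have hyx : y - x ∈ Icc 0 S := ⟨sub_nonneg.2 hxy, (sub_le_self _ hx.1).trans hy.2⟩
  calc f x ≤ f x + f (y - x) := le_add_of_nonneg_right (hpos _ hyx)
    _ = f y := by rw [← hf x hx _ hyx (by rwa [add_sub_cancel]), add_sub_cancel]

end AdditiveOn

section ClosedOrder

variable {F : Type*} [AddCommGroup F] [PartialOrder F] [Module ℝ F]
  [TopologicalSpace F] [OrderClosedTopology F] [ContinuousSMul ℝ F] {D V : F} {t u : ℝ}

theorem le_smul_of_forall_mem_Ioo (htu : t < u) (h : ∀ c ∈ Ioo t u, D ≤ c • V) :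
    D ≤ t • V :=
  (isClosed_le continuous_const (continuous_id.smul continuous_const)).closure_subset_iff.2 h
    (closure_Ioo htu.ne ▸ left_mem_Icc.2 htu.le)

theorem smul_le_of_forall_mem_Ioo (hut : u < t) (h : ∀ c ∈ Ioo u t, c • V ≤ D) :
    t • V ≤ D :=
  (isClosed_le (continuous_id.smul continuous_const) continuous_const).closure_subset_iff.2 h
    (closure_Ioo hut.ne ▸ right_mem_Icc.2 hut.le)

end ClosedOrder

section UnitInterval

variable {F : Type*} [AddCommGroup F] [Module ℝ F] {f : ℝ → F}

theorem AdditiveOn.map_div_unitInterval (hf : AdditiveOn f (Icc 0 1)) {m n : ℕ} (hmn : m ≤ n) :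
    f (m / n) = ((m : ℝ) / n) • f 1 := by
  rcases n.eq_zero_or_pos with rfl | hn
  · simpa using hf.map_zero (left_mem_Icc.2 zero_le_one)
  have hmul : ∀ k ≤ n, f (k / n) = k • f (1 / n) := fun k hk => by
    rw [div_eq_mul_one_div, ← nsmul_eq_mul]
    refine hf.map_nsmul fun j hj => ⟨by positivity, ?_⟩
    rw [nsmul_eq_mul, ← div_eq_mul_one_div, div_le_one (by positivity)]
    exact_mod_cast hj.trans hk
  have h1 : f 1 = (n : ℝ) • f (1 / n) := by
    rw [Nat.cast_smul_eq_nsmul, ← hmul n le_rfl, div_self (Nat.cast_ne_zero.2 hn.ne')]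
  rw [hmul m hmn, h1, smul_smul, div_mul_cancel₀ _ (Nat.cast_ne_zero.2 hn.ne'),
    Nat.cast_smul_eq_nsmul]

theorem AdditiveOn.map_ratCast_unitInterval (hf : AdditiveOn f (Icc 0 1)) {q : ℚ}
    (hq : (q : ℝ) ∈ Icc 0 1) : f q = (q : ℝ) • f 1 := by
  have hnum : ((q.num.toNat : ℕ) : ℝ) / q.den = q := by
    rw [Rat.cast_def, ← Int.cast_natCast, Int.toNat_of_nonneg
      (Rat.num_nonneg.2 (by exact_mod_cast hq.1))]
  have hle : q.num.toNat ≤ q.den := by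
    have h := hq.2
    rw [← hnum, div_le_one (by positivity)] at h
    exact_mod_cast h
  rw [← hnum, hf.map_div_unitInterval hle]

variable [PartialOrder F] [IsOrderedAddMonoid F] [IsOrderedModule ℝ F]
  [TopologicalSpace F] [OrderClosedTopology F] [ContinuousSMul ℝ F]

theorem AdditiveOn.eq_smul_of_monotoneOn (hf : AdditiveOn f (Icc 0 1))
    (hmono : MonotoneOn f (Icc 0 1)) {t : ℝ} (ht : t ∈ Icc 0 1) : f t = t • f 1 := by
  have hf1 : 0 ≤ f 1 := hf.map_zero (left_mem_Icc.2 zero_le_one) ▸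
    hmono (left_mem_Icc.2 zero_le_one) (right_mem_Icc.2 zero_le_one) zero_le_one
  apply le_antisymm
  · rcases ht.2.eq_or_lt with rfl | ht1
    · rw [one_smul]
    refine le_smul_of_forall_mem_Ioo ht1 fun c hc => ?_
    obtain ⟨q, htq, hqc⟩ := exists_rat_btwn hc.1
    have hq : (q : ℝ) ∈ Icc 0 1 := ⟨ht.1.trans htq.le, hqc.le.trans hc.2.le⟩
    calc f t ≤ f q := hmono ht hq htq.le
      _ = (q : ℝ) • f 1 := hf.map_ratCast_unitInterval hq
      _ ≤ c • f 1 := smul_le_smul_of_nonneg_right hqc.le hf1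
  · rcases ht.1.eq_or_lt with rfl | ht0
    · rw [zero_smul, hf.map_zero (left_mem_Icc.2 zero_le_one)]
    refine smul_le_of_forall_mem_Ioo ht0 fun c hc => ?_
    obtain ⟨q, hcq, hqt⟩ := exists_rat_btwn hc.2
    have hq : (q : ℝ) ∈ Icc 0 1 := ⟨hc.1.le.trans hcq.le, hqt.le.trans ht.2⟩
    calc c • f 1 ≤ (q : ℝ) • f 1 := smul_le_smul_of_nonneg_right hcq.le hf1
      _ = f q := (hf.map_ratCast_unitInterval hq).symm
      _ ≤ f t := hmono hq ht hqt.le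

end UnitInterval

theorem smul_add_smul_eq_add_smul_div {M : Type*} [AddCommGroup M] [Module ℝ M] {c c' : ℝ}
    (h : c + c' ≠ 0) (x y : M) :
    c • x + c' • y = (c + c') • ((c / (c + c')) • x + (c' / (c + c')) • y) := by
  rw [smul_add, smul_smul, smul_smul, mul_div_cancel₀ _ h, mul_div_cancel₀ _ h]

section Cone

variable {E : Type*} [AddCommGroup E] [PartialOrder E] [Module ℝ E] {S : E}

/-- The cone `C_S` generated by `B_S = Icc 0 S`. -/
def coneIcc (S : E) : Set E :=
  {Y | ∃ c : ℝ, 0 ≤ c ∧ ∃ Z, 0 ≤ Z ∧ Z ≤ S ∧ Y = c • Z}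

theorem mem_coneIcc_of_mem_Icc {X : E} (hX : X ∈ Icc 0 S) : X ∈ coneIcc S :=
  ⟨1, zero_le_one, X, hX.1, hX.2, (one_smul ℝ X).symm⟩

theorem zero_mem_coneIcc (hS : 0 ≤ S) : (0 : E) ∈ coneIcc S :=
  mem_coneIcc_of_mem_Icc (left_mem_Icc.2 hS)

theorem smul_mem_coneIcc {a : ℝ} (ha : 0 ≤ a) {X : E} (hX : X ∈ coneIcc S) :
    a • X ∈ coneIcc S := by
  obtain ⟨c, hc, Z, hZ, hZS, rfl⟩ := hX
  exact ⟨a * c, mul_nonneg ha hc, Z, hZ, hZS, smul_smul a c Z⟩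

variable [IsOrderedAddMonoid E] [IsOrderedModule ℝ E]

theorem smul_mem_Icc_zero {Z : E} (hZ : Z ∈ Icc 0 S) {t : ℝ} (ht : t ∈ Icc 0 1) :
    t • Z ∈ Icc 0 S :=
  (convex_Icc 0 S).smul_mem_of_zero_mem (left_mem_Icc.2 (hZ.1.trans hZ.2)) hZ ht

theorem div_smul_add_div_smul_mem_Icc_zero {c c' : ℝ} (hc : 0 ≤ c) (hc' : 0 ≤ c')
    (h : 0 < c + c') {Z Z' : E} (hZ : Z ∈ Icc 0 S) (hZ' : Z' ∈ Icc 0 S) :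
    (c / (c + c')) • Z + (c' / (c + c')) • Z' ∈ Icc 0 S :=
  convex_Icc 0 S hZ hZ' (by positivity) (by positivity) (by rw [← add_div, div_self h.ne'])

theorem add_mem_coneIcc {X Y : E} (hX : X ∈ coneIcc S) (hY : Y ∈ coneIcc S) :
    X + Y ∈ coneIcc S := by
  obtain ⟨c, hc, Z, hZ, hZS, rfl⟩ := hX
  obtain ⟨c', hc', Z', hZ', hZS', rfl⟩ := hY
  rcases (add_nonneg hc hc').eq_or_lt with h | h
  · obtain ⟨rfl, rfl⟩ := (add_eq_zero_iff_of_nonneg hc hc').1 h.symm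
    simpa using zero_mem_coneIcc (hZ.trans hZS)
  obtain ⟨hW, hWS⟩ := div_smul_add_div_smul_mem_Icc_zero hc hc' h ⟨hZ, hZS⟩ ⟨hZ', hZS'⟩
  exact ⟨c + c', h.le, _, hW, hWS, smul_add_smul_eq_add_smul_div h.ne' Z Z'⟩

theorem eqOn_coneIcc_of_eqOn_Icc {F : Type*} [AddCommGroup F] {ψ₁ ψ₂ : E → F}
    (h₁ : AdditiveOn ψ₁ (coneIcc S)) (h₂ : AdditiveOn ψ₂ (coneIcc S)) (h : EqOn ψ₁ ψ₂ (Icc 0 S)) :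
    EqOn ψ₁ ψ₂ (coneIcc S) := by
  rintro _ ⟨c, hc, Z, hZ, hZS, rfl⟩
  obtain ⟨n, hn⟩ := exists_nat_gt c
  have hn0 : (0 : ℝ) < n := hc.trans_lt hn
  have hU : (c / n) • Z ∈ Icc 0 S :=
    smul_mem_Icc_zero ⟨hZ, hZS⟩ ⟨by positivity, (div_le_one hn0).2 hn.le⟩
  have hmem : ∀ m ≤ n, m • (c / n) • Z ∈ coneIcc S := fun m _ => by
    rw [← Nat.cast_smul_eq_nsmul ℝ]
    exact smul_mem_coneIcc (Nat.cast_nonneg m) (mem_coneIcc_of_mem_Icc hU)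
  have hX : c • Z = n • (c / n) • Z := by
    rw [← Nat.cast_smul_eq_nsmul ℝ, smul_smul, mul_div_cancel₀ _ hn0.ne']
  rw [hX, h₁.map_nsmul hmem, h₂.map_nsmul hmem, h hU]

end Cone

section ConeExtension

variable {E F : Type*} [AddCommGroup E] [PartialOrder E] [IsOrderedAddMonoid E] [Module ℝ E]
  [IsOrderedModule ℝ E] [AddCommGroup F] [Module ℝ F]

open Classical in
def coneExtension (S : E) (φ : E → F) (X : E) : F :=
  if h : X ∈ coneIcc S then h.choose • φ h.choose_spec.2.choose else 0

variable [PartialOrder F] [IsOrderedAddMonoid F] [IsOrderedModule ℝ F]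
  [TopologicalSpace F] [OrderClosedTopology F] [ContinuousSMul ℝ F] {S : E} {φ : E → F}

theorem AdditiveOn.map_smul_of_mem_Icc (hφ : AdditiveOn φ (Icc 0 S))
    (hpos : ∀ X ∈ Icc 0 S, 0 ≤ φ X) {Z : E} (hZ : Z ∈ Icc 0 S) {t : ℝ} (ht : t ∈ Icc 0 1) :
    φ (t • Z) = t • φ Z := by
  have hadd : AdditiveOn (fun t : ℝ => φ (t • Z)) (Icc 0 1) := fun s hs t ht hst => by
    simp only [add_smul]
    exact hφ _ (smul_mem_Icc_zero hZ hs) _ (smul_mem_Icc_zero hZ ht)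
      (add_smul s t Z ▸ smul_mem_Icc_zero hZ hst)
  have hmono : MonotoneOn (fun t : ℝ => φ (t • Z)) (Icc 0 1) := fun s hs t ht hst =>
    hφ.monotoneOn_Icc_zero hpos (smul_mem_Icc_zero hZ hs) (smul_mem_Icc_zero hZ ht)
      (smul_le_smul_of_nonneg_right hst hZ.1)
  simpa using hadd.eq_smul_of_monotoneOn hmono ht

theorem AdditiveOn.smul_map_eq_of_smul_eq (hφ : AdditiveOn φ (Icc 0 S))
    (hpos : ∀ X ∈ Icc 0 S, 0 ≤ φ X) {c c' : ℝ} (hc : 0 ≤ c) (hc' : 0 ≤ c') {Z Z' : E}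
    (hZ : Z ∈ Icc 0 S) (hZ' : Z' ∈ Icc 0 S) (heq : c • Z = c' • Z') : c • φ Z = c' • φ Z' := by
  wlog hcc : c ≤ c' generalizing c c' Z Z'
  · exact (this hc' hc hZ' hZ heq.symm (le_of_not_ge hcc)).symm
  rcases hc'.eq_or_lt with rfl | hc'
  · rw [le_antisymm hcc hc, zero_smul, zero_smul]
  have hZ'eq : Z' = (c / c') • Z := by
    rw [div_eq_inv_mul, ← smul_smul, heq, smul_smul, inv_mul_cancel₀ hc'.ne', one_smul]
  rw [hZ'eq, hφ.map_smul_of_mem_Icc hpos hZ ⟨by positivity, (div_le_one hc').2 hcc⟩, smul_smul,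
    mul_div_cancel₀ _ hc'.ne']

variable (hφ : AdditiveOn φ (Icc 0 S)) (hpos : ∀ X ∈ Icc 0 S, 0 ≤ φ X)
include hφ hpos

theorem coneExtension_eq {c : ℝ} (hc : 0 ≤ c) {Z X : E} (hZ : Z ∈ Icc 0 S) (hX : X = c • Z) :
    coneExtension S φ X = c • φ Z := by
  have h : X ∈ coneIcc S := ⟨c, hc, Z, hZ.1, hZ.2, hX⟩
  have hc₀ := h.choose_spec.1
  have hZ₀ := h.choose_spec.2.choose_spec
  rw [coneExtension, dif_pos h]
  exact hφ.smul_map_eq_of_smul_eq hpos hc₀ hc ⟨hZ₀.1, hZ₀.2.1⟩ hZ (hZ₀.2.2.symm.trans hX)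

theorem coneExtension_eq_of_mem_Icc {X : E} (hX : X ∈ Icc 0 S) : coneExtension S φ X = φ X := by
  rw [coneExtension_eq hφ hpos zero_le_one hX (one_smul ℝ X).symm, one_smul]

theorem coneExtension_nonneg {X : E} (hX : X ∈ coneIcc S) : 0 ≤ coneExtension S φ X := by
  obtain ⟨c, hc, Z, hZ, hZS, rfl⟩ := hX
  rw [coneExtension_eq hφ hpos hc ⟨hZ, hZS⟩ rfl]
  exact smul_nonneg hc (hpos Z ⟨hZ, hZS⟩)

theorem coneExtension_smul {a : ℝ} (ha : 0 ≤ a) {X : E} (hX : X ∈ coneIcc S) :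
    coneExtension S φ (a • X) = a • coneExtension S φ X := by
  obtain ⟨c, hc, Z, hZ, hZS, rfl⟩ := hX
  rw [coneExtension_eq hφ hpos hc ⟨hZ, hZS⟩ rfl,
    coneExtension_eq hφ hpos (mul_nonneg ha hc) ⟨hZ, hZS⟩ (smul_smul a c Z), smul_smul]

theorem coneExtension_add {X Y : E} (hX : X ∈ coneIcc S) (hY : Y ∈ coneIcc S) :
    coneExtension S φ (X + Y) = coneExtension S φ X + coneExtension S φ Y := by
  obtain ⟨c, hc, Z, hZ, hZS, rfl⟩ := hX
  obtain ⟨c', hc', Z', hZ', hZS', rfl⟩ := hY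
  rw [coneExtension_eq hφ hpos hc ⟨hZ, hZS⟩ rfl, coneExtension_eq hφ hpos hc' ⟨hZ', hZS'⟩ rfl]
  rcases (add_nonneg hc hc').eq_or_lt with h | h
  · obtain ⟨rfl, rfl⟩ := (add_eq_zero_iff_of_nonneg hc hc').1 h.symm
    rw [coneExtension_eq hφ hpos le_rfl ⟨hZ, hZS⟩ (by simp)]
    simp
  have ht : c / (c + c') ∈ Icc 0 1 :=
    ⟨by positivity, (div_le_one h).2 (le_add_of_nonneg_right hc')⟩
  have ht' : c' / (c + c') ∈ Icc 0 1 :=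
    ⟨by positivity, (div_le_one h).2 (le_add_of_nonneg_left hc)⟩
  have hW := div_smul_add_div_smul_mem_Icc_zero hc hc' h ⟨hZ, hZS⟩ ⟨hZ', hZS'⟩
  rw [coneExtension_eq hφ hpos h.le hW (smul_add_smul_eq_add_smul_div h.ne' Z Z'),
    hφ _ (smul_mem_Icc_zero ⟨hZ, hZS⟩ ht) _ (smul_mem_Icc_zero ⟨hZ', hZS'⟩ ht') hW,
    hφ.map_smul_of_mem_Icc hpos ⟨hZ, hZS⟩ ht, hφ.map_smul_of_mem_Icc hpos ⟨hZ', hZS'⟩ ht',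
    ← smul_add_smul_eq_add_smul_div h.ne']

end ConeExtension

section LinearExtension

variable {E F : Type*} [AddCommGroup E] [Module ℝ E] [AddCommGroup F] [Module ℝ F]
  {K : PointedCone ℝ E} {s : Set E}

theorem exists_sub_eq_of_mem_span (hs : s ⊆ K) {v : E} (hv : v ∈ span ℝ s) :
    ∃ x ∈ K, ∃ y ∈ K, v = x - y := by
  induction hv using Submodule.span_induction with
  | mem x hx => exact ⟨x, hs hx, 0, K.zero_mem, (sub_zero x).symm⟩
  | zero => exact ⟨0, K.zero_mem, 0, K.zero_mem, (sub_zero 0).symm⟩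
  | add u v _ _ hu hv =>
    obtain ⟨x, hx, y, hy, rfl⟩ := hu
    obtain ⟨x', hx', y', hy', rfl⟩ := hv
    exact ⟨x + x', K.add_mem hx hx', y + y', K.add_mem hy hy', by abel⟩
  | smul a v _ hv =>
    obtain ⟨x, hx, y, hy, rfl⟩ := hv
    rcases le_total 0 a with ha | ha
    · exact ⟨a • x, K.smul_mem ha hx, a • y, K.smul_mem ha hy, smul_sub a x y⟩
    · refine ⟨(-a) • y, K.smul_mem (neg_nonneg.2 ha) hy, (-a) • x,
        K.smul_mem (neg_nonneg.2 ha) hx, ?_⟩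
      rw [neg_smul, neg_smul, smul_sub]
      abel

theorem exists_linearMap_span_eq_of_additiveOn (hs : s ⊆ K) {ψ : E → F}
    (hadd : AdditiveOn ψ K) (hsmul : ∀ c : ℝ, 0 ≤ c → ∀ x ∈ K, ψ (c • x) = c • ψ x) :
    ∃ L : span ℝ s →ₗ[ℝ] F, ∀ x (hx : x ∈ s), L ⟨x, subset_span hx⟩ = ψ x := by
  choose x hx y hy hxy using fun v : span ℝ s => exists_sub_eq_of_mem_span hs v.2
  have key : ∀ (v : span ℝ s) (a b : E), a ∈ K → b ∈ K → (v : E) = a - b →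
      ψ (x v) - ψ (y v) = ψ a - ψ b :=
    fun v a b ha hb h => hadd.sub_eq_sub (fun _ h₁ _ h₂ => K.add_mem h₁ h₂) (hx v) (hy v) ha hb
      ((hxy v).symm.trans h)
  refine ⟨{ toFun v := ψ (x v) - ψ (y v), map_add' u v := ?_, map_smul' c v := ?_ },
    fun z hz => ?_⟩
  · rw [key (u + v) _ _ (K.add_mem (hx u) (hx v)) (K.add_mem (hy u) (hy v))
      (by rw [coe_add, hxy u, hxy v]; abel), hadd _ (hx u) _ (hx v) (K.add_mem (hx u) (hx v)),
      hadd _ (hy u) _ (hy v) (K.add_mem (hy u) (hy v))]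
    abel
  · rw [RingHom.id_apply]
    rcases le_total 0 c with hc | hc
    · rw [key (c • v) _ _ (K.smul_mem hc (hx v)) (K.smul_mem hc (hy v))
        (by rw [coe_smul, hxy v, smul_sub]), hsmul c hc _ (hx v), hsmul c hc _ (hy v), smul_sub]
    · have hc' : 0 ≤ -c := neg_nonneg.2 hc
      rw [key (c • v) _ _ (K.smul_mem hc' (hy v)) (K.smul_mem hc' (hx v))
        (by rw [coe_smul, hxy v, neg_smul, neg_smul, smul_sub]; abel), hsmul _ hc' _ (hy v),
        hsmul _ hc' _ (hx v), neg_smul, neg_smul, smul_sub]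
      abel
  · change ψ (x _) - ψ (y _) = ψ z
    rw [key _ z 0 (hs hz) K.zero_mem (sub_zero z).symm, hadd.map_zero K.zero_mem, sub_zero]

end LinearExtension

theorem additive_extension_from_BS_general
    {Ω : Type*} [MeasurableSpace Ω] {μ : Measure Ω}
    (S : Lp ℝ 1 μ) (hS : 0 ≤ S)
    (φ : Lp ℝ 1 μ → Lp ℝ 1 μ)
    -- φ maps B_S into L¹₊
    (hpos : ∀ X, 0 ≤ X → X ≤ S → 0 ≤ φ X)
    -- φ is additive on B_S
    (hadd : ∀ X Y, 0 ≤ X → X ≤ S → 0 ≤ Y → Y ≤ S → X + Y ≤ S → φ (X + Y) = φ X + φ Y) :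
    -- a unique additive extension (valued in L¹₊) on the cone C_S
    (∃ ψ : Lp ℝ 1 μ → Lp ℝ 1 μ,
      ((∀ X, 0 ≤ X → X ≤ S → ψ X = φ X) ∧
       (∀ X, X ∈ {Y : Lp ℝ 1 μ | ∃ c : ℝ, 0 ≤ c ∧ ∃ Z, 0 ≤ Z ∧ Z ≤ S ∧ Y = c • Z} → 0 ≤ ψ X) ∧
       (∀ X Y, X ∈ {Y : Lp ℝ 1 μ | ∃ c : ℝ, 0 ≤ c ∧ ∃ Z, 0 ≤ Z ∧ Z ≤ S ∧ Y = c • Z} →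
               Y ∈ {Y : Lp ℝ 1 μ | ∃ c : ℝ, 0 ≤ c ∧ ∃ Z, 0 ≤ Z ∧ Z ≤ S ∧ Y = c • Z} →
               ψ (X + Y) = ψ X + ψ Y)) ∧
      (∀ ψ' : Lp ℝ 1 μ → Lp ℝ 1 μ,
        ((∀ X, 0 ≤ X → X ≤ S → ψ' X = φ X) ∧
         (∀ X, X ∈ {Y : Lp ℝ 1 μ | ∃ c : ℝ, 0 ≤ c ∧ ∃ Z, 0 ≤ Z ∧ Z ≤ S ∧ Y = c • Z} → 0 ≤ ψ' X) ∧
         (∀ X Y, X ∈ {Y : Lp ℝ 1 μ | ∃ c : ℝ, 0 ≤ c ∧ ∃ Z, 0 ≤ Z ∧ Z ≤ S ∧ Y = c • Z} →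
                 Y ∈ {Y : Lp ℝ 1 μ | ∃ c : ℝ, 0 ≤ c ∧ ∃ Z, 0 ≤ Z ∧ Z ≤ S ∧ Y = c • Z} →
                 ψ' (X + Y) = ψ' X + ψ' Y)) →
        ∀ X, X ∈ {Y : Lp ℝ 1 μ | ∃ c : ℝ, 0 ≤ c ∧ ∃ Z, 0 ≤ Z ∧ Z ≤ S ∧ Y = c • Z} →
          ψ' X = ψ X)) ∧
    -- a unique linear extension on the linear span of B_S
    (∃! L : (Submodule.span ℝ {X : Lp ℝ 1 μ | 0 ≤ X ∧ X ≤ S}) →ₗ[ℝ] Lp ℝ 1 μ,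
      ∀ X (hX : X ∈ {X : Lp ℝ 1 μ | 0 ≤ X ∧ X ≤ S}),
        L ⟨X, Submodule.subset_span hX⟩ = φ X) := by
  have hφ : AdditiveOn φ (Icc 0 S) := fun X hX Y hY hXY => hadd X Y hX.1 hX.2 hY.1 hY.2 hXY.2
  have hφpos : ∀ X ∈ Icc 0 S, 0 ≤ φ X := fun X hX => hpos X hX.1 hX.2
  have hψφ : EqOn (coneExtension S φ) φ (Icc 0 S) := fun X hX =>
    coneExtension_eq_of_mem_Icc hφ hφpos hX
  have hψ : AdditiveOn (coneExtension S φ) (coneIcc S) := fun X hX Y hY _ =>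
    coneExtension_add hφ hφpos hX hY
  let K : PointedCone ℝ (Lp ℝ 1 μ) :=
    { carrier := coneIcc S, add_mem' := add_mem_coneIcc, zero_mem' := zero_mem_coneIcc hS,
      smul_mem' := fun c _ hX => smul_mem_coneIcc c.2 hX }
  obtain ⟨L, hL⟩ := exists_linearMap_span_eq_of_additiveOn (K := K)
    (fun X => mem_coneIcc_of_mem_Icc) hψ fun c hc X hX => coneExtension_smul hφ hφpos hc hX
  refine ⟨⟨coneExtension S φ, ⟨fun X hX hXS => hψφ ⟨hX, hXS⟩,
    fun X hX => coneExtension_nonneg hφ hφpos hX,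
    fun X Y hX hY => coneExtension_add hφ hφpos hX hY⟩, ?_⟩,
    L, fun X hX => (hL X hX).trans (hψφ hX), ?_⟩
  · rintro ψ' ⟨hψ'φ, -, hψ'⟩
    exact eqOn_coneIcc_of_eqOn_Icc (fun X hX Y hY _ => hψ' X Y hX hY) hψ
      fun X hX => (hψ'φ X hX.1 hX.2).trans (hψφ hX).symm
  · intro L' hL'
    exact LinearMap.ext_on span_span_coe_preimage fun v hv =>
      (hL' v hv).trans ((hL v hv).trans (hψφ hv)).symm

/-- for S ∈ L¹₊ and B_S = {X ∈ L¹₊ : X ≤ S}, any additive map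
φ : B_S → L¹₊ has a unique additive extension to the cone C_S generated by B_S
(with values in L¹₊) and a unique linear extension to the linear span of B_S.
(The order on L¹ is the a.e. order, so `0 ≤ X` encodes membership in L¹₊.) -/
theorem additive_extension_from_BS
    {Ω : Type*} [MeasurableSpace Ω] {μ : Measure Ω} [IsProbabilityMeasure μ]
    (S : Lp ℝ 1 μ) (hS : 0 ≤ S)
    (φ : Lp ℝ 1 μ → Lp ℝ 1 μ)
    -- φ maps B_S into L¹₊
    (hpos : ∀ X, 0 ≤ X → X ≤ S → 0 ≤ φ X)
    -- φ is additive on B_S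
    (hadd : ∀ X Y, 0 ≤ X → X ≤ S → 0 ≤ Y → Y ≤ S → X + Y ≤ S → φ (X + Y) = φ X + φ Y) :
    -- a unique additive extension (valued in L¹₊) on the cone C_S
    (∃ ψ : Lp ℝ 1 μ → Lp ℝ 1 μ,
      ((∀ X, 0 ≤ X → X ≤ S → ψ X = φ X) ∧
       (∀ X, X ∈ {Y : Lp ℝ 1 μ | ∃ c : ℝ, 0 ≤ c ∧ ∃ Z, 0 ≤ Z ∧ Z ≤ S ∧ Y = c • Z} → 0 ≤ ψ X) ∧
       (∀ X Y, X ∈ {Y : Lp ℝ 1 μ | ∃ c : ℝ, 0 ≤ c ∧ ∃ Z, 0 ≤ Z ∧ Z ≤ S ∧ Y = c • Z} →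
               Y ∈ {Y : Lp ℝ 1 μ | ∃ c : ℝ, 0 ≤ c ∧ ∃ Z, 0 ≤ Z ∧ Z ≤ S ∧ Y = c • Z} →
               ψ (X + Y) = ψ X + ψ Y)) ∧
      (∀ ψ' : Lp ℝ 1 μ → Lp ℝ 1 μ,
        ((∀ X, 0 ≤ X → X ≤ S → ψ' X = φ X) ∧
         (∀ X, X ∈ {Y : Lp ℝ 1 μ | ∃ c : ℝ, 0 ≤ c ∧ ∃ Z, 0 ≤ Z ∧ Z ≤ S ∧ Y = c • Z} → 0 ≤ ψ' X) ∧
         (∀ X Y, X ∈ {Y : Lp ℝ 1 μ | ∃ c : ℝ, 0 ≤ c ∧ ∃ Z, 0 ≤ Z ∧ Z ≤ S ∧ Y = c • Z} →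
                 Y ∈ {Y : Lp ℝ 1 μ | ∃ c : ℝ, 0 ≤ c ∧ ∃ Z, 0 ≤ Z ∧ Z ≤ S ∧ Y = c • Z} →
                 ψ' (X + Y) = ψ' X + ψ' Y)) →
        ∀ X, X ∈ {Y : Lp ℝ 1 μ | ∃ c : ℝ, 0 ≤ c ∧ ∃ Z, 0 ≤ Z ∧ Z ≤ S ∧ Y = c • Z} →
          ψ' X = ψ X)) ∧
    -- a unique linear extension on the linear span of B_S
    (∃! L : (Submodule.span ℝ {X : Lp ℝ 1 μ | 0 ≤ X ∧ X ≤ S}) →ₗ[ℝ] Lp ℝ 1 μ,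
      ∀ X (hX : X ∈ {X : Lp ℝ 1 μ | 0 ≤ X ∧ X ≤ S}),
        L ⟨X, Submodule.subset_span hX⟩ = φ X) :=
  additive_extension_from_BS_general S hS φ hpos hadd
end
end

section
/- Let S be an integrable random variable on (Ω, 𝓕, ℙ), 𝓖 = σ(S), and let φ : L¹(Ω, 𝓕, ℙ) → L¹(Ω, 𝓖, ℙ) satisfy: (a) φ(t) = t for every constant t ∈ ℝ; (b) φ(X + Y) = φ(X) + φ(Y) for all X, Y; (c) φ(X) ≤ φ(Y) a.s. whenever X ≤ Y a.s.; (d) φ(S) = S; and (e) E[φ(X)] = E[X] for all X. Then φ(X) = X for every 𝓖-measurable X ∈ L¹(Ω, 𝓕, ℙ). -/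
/-!
By monotonicity `|φ X| ≤ φ |X|`, and preservation of expectations turns this into
`‖φ X‖₁ ≤ ‖X‖₁`. So `φ` is continuous, hence `ℝ`-linear, and its fixed points form a closed
subspace `V` of `L¹`. If `X` and `Y` are fixed, then `φ (X ⊓ Y) ≤ X ⊓ Y` with equal expectations,
so `X ⊓ Y` is fixed: `V` is a closed vector sublattice containing the constants and `S`.
Clamped affine functions of `S` decrease to the indicator of `{S ≤ c}`, so these indicators
lie in `V`; a Dynkin argument extends this to the indicators of all of `σ(S)`, and density of
`σ(S)`-simple functions does the rest.
-/

open MeasureTheory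

noncomputable section

/-- The σ-field generated by (the canonical strongly measurable representative of)
an L¹ random variable. -/
def sigmaGen {Ω : Type*} [MeasurableSpace Ω] {μ : MeasureTheory.Measure Ω}
    (f : MeasureTheory.Lp ℝ 1 μ) : MeasurableSpace Ω :=
  MeasurableSpace.comap (f : Ω → ℝ) inferInstance

open Filter Topology

theorem tendsto_max_min_mul_sub_indicator_Iic (x c : ℝ) :
    Tendsto (fun n : ℕ ↦ max (min 1 (n * (c - x) + 1)) 0) atTop
      (𝓝 ((Set.Iic c).indicator (fun _ ↦ (1 : ℝ)) x)) := by
  by_cases hx : x ≤ c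
  · rw [Set.indicator_of_mem (Set.mem_Iic.mpr hx)]
    refine tendsto_const_nhds.congr fun n ↦ ?_
    have : 0 ≤ (n : ℝ) * (c - x) := mul_nonneg n.cast_nonneg (sub_nonneg.mpr hx)
    rw [min_eq_left (by linarith), max_eq_left zero_le_one]
  · rw [Set.indicator_of_notMem (by simpa using hx)]
    have hlin : Tendsto (fun n : ℕ ↦ (n : ℝ) * (c - x) + 1) atTop atBot :=
      tendsto_atBot_add_const_right _ _
        (tendsto_natCast_atTop_atTop.atTop_mul_const_of_neg (by linarith))
    refine tendsto_const_nhds.congr' ?_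
    filter_upwards [hlin.eventually_le_atBot 0] with n hn
    rw [min_eq_right (by linarith), max_eq_right hn]

namespace MeasureTheory

variable {Ω : Type*} {m : MeasurableSpace Ω} {μ : Measure Ω}

theorem L1.norm_eq_integral_of_nonneg {f : Lp ℝ 1 μ} (hf : 0 ≤ f) :
    ‖f‖ = ∫ ω, f ω ∂μ := by
  rw [L1.norm_eq_integral_norm]
  refine integral_congr_ae ?_
  filter_upwards [(Lp.coeFn_nonneg f).mpr hf] with ω hω
  exact Real.norm_of_nonneg hω

theorem L1.eq_of_le_of_integral_eq {f g : Lp ℝ 1 μ} (hfg : f ≤ g)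
    (h : ∫ ω, f ω ∂μ = ∫ ω, g ω ∂μ) : f = g :=
  Lp.ext <| (integral_eq_iff_of_ae_le (L1.integrable_coeFn f) (L1.integrable_coeFn g)
    ((Lp.coeFn_le f g).mpr hfg)).mp h

theorem L1.tendsto_of_ae_tendsto_of_norm_le [IsFiniteMeasure μ] {E : Type*}
    [NormedAddCommGroup E] {F : ℕ → Lp E 1 μ} {f : Lp E 1 μ} {C : ℝ}
    (hF : ∀ n, ∀ᵐ ω ∂μ, ‖F n ω‖ ≤ C)
    (hlim : ∀ᵐ ω ∂μ, Tendsto (fun n ↦ F n ω) atTop (𝓝 (f ω))) :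
    Tendsto F atTop (𝓝 f) := by
  rw [tendsto_iff_dist_tendsto_zero]
  simp_rw [L1.dist_eq_integral_dist]
  have hdom : Tendsto (fun n ↦ ∫ ω, dist (F n ω) (f ω) ∂μ) atTop (𝓝 (∫ _, (0 : ℝ) ∂μ)) := by
    refine tendsto_integral_of_dominated_convergence (fun ω ↦ C + ‖f ω‖)
      (fun n ↦ (Lp.aestronglyMeasurable (F n)).dist (Lp.aestronglyMeasurable f))
      ((integrable_const C).add (L1.integrable_coeFn f).norm) (fun n ↦ ?_) ?_
    · filter_upwards [hF n] with ω hω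
      rw [Real.norm_of_nonneg dist_nonneg]
      exact (dist_le_norm_add_norm _ _).trans (by linarith)
    · filter_upwards [hlim] with ω hω
      exact tendsto_iff_dist_tendsto_zero.mp hω
  simpa using hdom

section PositiveMap

variable {φ : Lp ℝ 1 μ →+ Lp ℝ 1 μ}

theorem L1.norm_map_le_of_monotone (hmono : Monotone φ)
    (hint : ∀ X, ∫ ω, φ X ω ∂μ = ∫ ω, X ω ∂μ) (X : Lp ℝ 1 μ) : ‖φ X‖ ≤ ‖X‖ := by
  have hpos : 0 ≤ φ |X| := map_zero φ ▸ hmono (abs_nonneg X)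
  have habs : |φ X| ≤ |φ (|X|)| := by
    rw [abs_of_nonneg hpos, abs_le']
    exact ⟨hmono (le_abs_self X), map_neg φ X ▸ hmono (neg_le_abs X)⟩
  calc ‖φ X‖ ≤ ‖φ |X|‖ := norm_le_norm_of_abs_le_abs habs
    _ = ‖|X|‖ := by
      rw [L1.norm_eq_integral_of_nonneg hpos, L1.norm_eq_integral_of_nonneg (abs_nonneg X), hint]
    _ = ‖X‖ := norm_abs_eq_norm X

theorem L1.continuous_of_monotone (hmono : Monotone φ)
    (hint : ∀ X, ∫ ω, φ X ω ∂μ = ∫ ω, X ω ∂μ) : Continuous φ :=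
  AddMonoidHomClass.continuous_of_bound φ 1 fun X ↦ by
    simpa using L1.norm_map_le_of_monotone hmono hint X

theorem L1.map_inf_eq_of_map_eq_self (hmono : Monotone φ)
    (hint : ∀ X, ∫ ω, φ X ω ∂μ = ∫ ω, X ω ∂μ) {X Y : Lp ℝ 1 μ} (hX : φ X = X) (hY : φ Y = Y) :
    φ (X ⊓ Y) = X ⊓ Y :=
  L1.eq_of_le_of_integral_eq
    (le_inf ((hmono inf_le_left).trans_eq hX) ((hmono inf_le_right).trans_eq hY)) (hint _)

end PositiveMap

theorem sigmaGen_le (S : Lp ℝ 1 μ) : sigmaGen S ≤ m :=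
  (Lp.stronglyMeasurable S).measurable.comap_le

theorem sigmaGen_eq_generateFrom_preimage_Iic (S : Lp ℝ 1 μ) :
    sigmaGen S = MeasurableSpace.generateFrom (Set.preimage (S : Ω → ℝ) '' Set.range Set.Iic) := by
  rw [sigmaGen, BorelSpace.measurable_eq (α := ℝ), borel_eq_generateFrom_Iic,
    MeasurableSpace.comap_generateFrom]

section ClosedSublattice

variable {V : Submodule ℝ (Lp ℝ 1 μ)}

theorem L1.sup_mem_of_inf_mem (hinf : ∀ X ∈ V, ∀ Y ∈ V, X ⊓ Y ∈ V) {X Y : Lp ℝ 1 μ}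
    (hX : X ∈ V) (hY : Y ∈ V) : X ⊔ Y ∈ V := by
  rw [← neg_neg (X ⊔ Y), neg_sup]
  exact V.neg_mem (hinf _ (V.neg_mem hX) _ (V.neg_mem hY))

theorem L1.indicatorConstLp_preimage_Iic_mem [IsFiniteMeasure μ]
    (hV : IsClosed (V : Set (Lp ℝ 1 μ))) (hinf : ∀ X ∈ V, ∀ Y ∈ V, X ⊓ Y ∈ V)
    (hconst : ∀ t : ℝ, Lp.const 1 μ t ∈ V) {S : Lp ℝ 1 μ} (hS : S ∈ V) (c : ℝ)
    (hc : MeasurableSet ((S : Ω → ℝ) ⁻¹' Set.Iic c)) :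
    indicatorConstLp 1 hc (measure_ne_top μ _) (1 : ℝ) ∈ V := by
  set T : ℕ → Lp ℝ 1 μ := fun n ↦
    (Lp.const 1 μ 1 ⊓ ((n : ℝ) • (Lp.const 1 μ c - S) + Lp.const 1 μ 1)) ⊔ 0
  have hT : ∀ n, T n ∈ V := fun n ↦
    L1.sup_mem_of_inf_mem hinf (hinf _ (hconst 1) _ (V.add_mem
      (V.smul_mem _ (V.sub_mem (hconst c) hS)) (hconst 1))) V.zero_mem
  have hTapply : ∀ n, ∀ᵐ ω ∂μ, T n ω = max (min 1 (n * (c - S ω) + 1)) 0 := by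
    intro n
    filter_upwards [Lp.coeFn_sup (Lp.const 1 μ 1 ⊓ ((n : ℝ) • (Lp.const 1 μ c - S) +
        Lp.const 1 μ 1)) 0, Lp.coeFn_inf (Lp.const 1 μ 1) ((n : ℝ) • (Lp.const 1 μ c - S) +
        Lp.const 1 μ 1), Lp.coeFn_add ((n : ℝ) • (Lp.const 1 μ c - S)) (Lp.const 1 μ 1),
      Lp.coeFn_smul (n : ℝ) (Lp.const 1 μ c - S), Lp.coeFn_sub (Lp.const 1 μ c) S,
      Lp.coeFn_const 1 μ (1 : ℝ), Lp.coeFn_const 1 μ c, Lp.coeFn_zero ℝ 1 μ]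
      with ω h1 h2 h3 h4 h5 h6 h7 h8
    rw [h1, Pi.sup_apply, h2, Pi.inf_apply, h3, Pi.add_apply, h4, Pi.smul_apply, h5,
      Pi.sub_apply, h6, h7, h8]
    rfl
  refine hV.mem_of_tendsto (L1.tendsto_of_ae_tendsto_of_norm_le (C := 1) (fun n ↦ ?_) ?_)
    (Eventually.of_forall hT)
  · filter_upwards [hTapply n] with ω hω
    rw [hω, Real.norm_of_nonneg (le_max_right _ _)]
    exact max_le (min_le_left _ _) zero_le_one
  · filter_upwards [ae_all_iff.mpr hTapply, indicatorConstLp_coeFn (p := 1) (hs := hc)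
      (hμs := measure_ne_top μ _) (c := (1 : ℝ))] with ω hω hind
    simp only [hω, hind]
    exact tendsto_max_min_mul_sub_indicator_Iic _ c

theorem L1.indicatorConstLp_compl_mem [IsFiniteMeasure μ] (hone : Lp.const 1 μ (1 : ℝ) ∈ V)
    {t : Set Ω} (ht : MeasurableSet t) (htV : indicatorConstLp 1 ht (measure_ne_top μ t) 1 ∈ V)
    (htc : MeasurableSet tᶜ) : indicatorConstLp 1 htc (measure_ne_top μ tᶜ) (1 : ℝ) ∈ V := by
  have hunion : ∀ hu : MeasurableSet (t ∪ tᶜ),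
      indicatorConstLp 1 hu (measure_ne_top μ _) (1 : ℝ) = Lp.const 1 μ 1 := by
    rw [Set.union_compl_self]
    exact fun _ ↦ indicatorConstLp_univ 1 μ 1
  rw [← add_sub_cancel_left (indicatorConstLp 1 ht (measure_ne_top μ t) (1 : ℝ))
    (indicatorConstLp 1 htc _ 1), ← indicatorConstLp_disjoint_union ht htc _ _
    disjoint_compl_right, hunion]
  exact V.sub_mem hone htV

theorem L1.indicatorConstLp_iUnion_mem [IsFiniteMeasure μ] (hV : IsClosed (V : Set (Lp ℝ 1 μ)))
    {f : ℕ → Set Ω} (hdisj : Pairwise (Function.onFun Disjoint f)) (hf : ∀ i, MeasurableSet (f i))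
    (hfV : ∀ i, indicatorConstLp 1 (hf i) (measure_ne_top μ (f i)) (1 : ℝ) ∈ V)
    (hU : MeasurableSet (⋃ i, f i)) :
    indicatorConstLp 1 hU (measure_ne_top μ _) (1 : ℝ) ∈ V := by
  have hpart : ∀ n, MeasurableSet (⋃ i < n, f i) := fun n ↦
    MeasurableSet.biUnion (Set.to_countable _) fun i _ ↦ hf i
  have hpartV : ∀ n, indicatorConstLp 1 (hpart n) (measure_ne_top μ _) (1 : ℝ) ∈ V := by
    intro n
    induction n with
    | zero => simp
    | succ n ih =>
      have hdisj_n : Disjoint (⋃ i < n, f i) (f n) :=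
        Set.disjoint_iUnion₂_left.mpr fun i hi ↦ hdisj (Nat.ne_of_lt hi)
      have key : ∀ h : MeasurableSet ((⋃ i < n, f i) ∪ f n),
          indicatorConstLp 1 h (measure_ne_top μ _) (1 : ℝ) ∈ V := fun h ↦ by
        rw [indicatorConstLp_disjoint_union (hpart n) (hf n) (measure_ne_top μ _)
          (measure_ne_top μ _) hdisj_n]
        exact V.add_mem ih (hfV n)
      rw [← Set.biUnion_lt_succ] at key
      exact key _
  refine hV.mem_of_tendsto (L1.tendsto_of_ae_tendsto_of_norm_le (C := 1) (fun n ↦ ?_) ?_)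
    (Eventually.of_forall hpartV)
  · filter_upwards [indicatorConstLp_coeFn (p := 1) (hs := hpart n)
      (hμs := measure_ne_top μ _) (c := (1 : ℝ))] with ω hω
    rw [hω]
    exact (norm_indicator_le_norm_self _ _).trans norm_one.le
  · filter_upwards [ae_all_iff.mpr fun n ↦ indicatorConstLp_coeFn (p := 1) (hs := hpart n)
      (hμs := measure_ne_top μ _) (c := (1 : ℝ)), indicatorConstLp_coeFn (p := 1) (hs := hU)
      (hμs := measure_ne_top μ _) (c := (1 : ℝ))] with ω hω hωU
    simp only [hω, hωU, tendsto_indicator_const_apply_iff_eventually]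
    by_cases hmem : ω ∈ ⋃ i, f i
    · obtain ⟨i, hi⟩ := Set.mem_iUnion.mp hmem
      filter_upwards [eventually_gt_atTop i] with n hn
      exact iff_of_true (Set.mem_biUnion hn hi) hmem
    · exact Eventually.of_forall fun n ↦
        iff_of_false (fun h ↦ hmem (Set.iUnion₂_subset_iUnion _ f h)) hmem

theorem L1.indicatorConstLp_mem_of_measurableSet_sigmaGen [IsFiniteMeasure μ]
    (hV : IsClosed (V : Set (Lp ℝ 1 μ))) (hinf : ∀ X ∈ V, ∀ Y ∈ V, X ⊓ Y ∈ V)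
    (hconst : ∀ t : ℝ, Lp.const 1 μ t ∈ V) {S : Lp ℝ 1 μ} (hS : S ∈ V) {t : Set Ω}
    (ht : MeasurableSet[sigmaGen S] t) (htm : MeasurableSet t) :
    indicatorConstLp 1 htm (measure_ne_top μ t) (1 : ℝ) ∈ V := by
  revert htm
  refine MeasurableSpace.induction_on_inter
    (C := fun t _ ↦ ∀ htm : MeasurableSet t, indicatorConstLp 1 htm (measure_ne_top μ t) 1 ∈ V)
    (sigmaGen_eq_generateFrom_preimage_Iic S) (isPiSystem_Iic.comap _) ?_ ?_ ?_ ?_ t ht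
  · simp
  · rintro _ ⟨_, ⟨c, rfl⟩, rfl⟩
    exact L1.indicatorConstLp_preimage_Iic_mem hV hinf hconst hS c
  · intro t _ ih htc
    exact L1.indicatorConstLp_compl_mem (hconst 1) htc.of_compl (ih _) htc
  · intro f hdisj hf ih hU
    exact L1.indicatorConstLp_iUnion_mem hV hdisj (fun i ↦ sigmaGen_le S _ (hf i))
      (fun i ↦ ih i _) hU

theorem L1.mem_of_aestronglyMeasurable_sigmaGen [IsFiniteMeasure μ]
    (hV : IsClosed (V : Set (Lp ℝ 1 μ))) (hinf : ∀ X ∈ V, ∀ Y ∈ V, X ⊓ Y ∈ V)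
    (hconst : ∀ t : ℝ, Lp.const 1 μ t ∈ V) {S : Lp ℝ 1 μ} (hS : S ∈ V) {X : Lp ℝ 1 μ}
    (hX : AEStronglyMeasurable[sigmaGen S] X μ) : X ∈ V := by
  refine Lp.induction_stronglyMeasurable (sigmaGen_le S) ENNReal.one_ne_top (· ∈ V) ?_ ?_ ?_ X hX
  · intro c s hs hμs
    have hsmul : indicatorConstLp 1 (sigmaGen_le S s hs) hμs.ne c =
        c • indicatorConstLp 1 (sigmaGen_le S s hs) hμs.ne (1 : ℝ) := by
      refine Lp.ext ?_
      filter_upwards [Lp.coeFn_smul c (indicatorConstLp 1 (sigmaGen_le S s hs) hμs.ne (1 : ℝ)),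
        indicatorConstLp_coeFn (p := 1) (hs := sigmaGen_le S s hs) (hμs := hμs.ne) (c := c),
        indicatorConstLp_coeFn (p := 1) (hs := sigmaGen_le S s hs) (hμs := hμs.ne)
          (c := (1 : ℝ))] with ω h1 h2 h3
      rw [h1, h2, Pi.smul_apply, h3, smul_eq_mul]
      by_cases hω : ω ∈ s <;> simp [hω]
    rw [Lp.simpleFunc.coe_indicatorConst, hsmul]
    exact V.smul_mem c (L1.indicatorConstLp_mem_of_measurableSet_sigmaGen hV hinf hconst hS hs _)
  · exact fun f g _ _ _ _ _ hfV hgV ↦ V.add_mem hfV hgV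
  · exact hV.preimage continuous_subtype_val

end ClosedSublattice

end MeasureTheory

theorem condexp_like_map_fixes_measurable_general
    {Ω : Type*} [MeasurableSpace Ω] {μ : Measure Ω} [IsProbabilityMeasure μ]
    (S : Lp ℝ 1 μ)
    (φ : Lp ℝ 1 μ → Lp ℝ 1 μ)
    -- (a) constant preserving
    (hconst : ∀ t : ℝ, (φ ((memLp_const t).toLp (fun _ => t)) : Ω → ℝ) =ᵐ[μ] fun _ => t)
    -- (b) additivity
    (hadd : ∀ X Y, φ (X + Y) = φ X + φ Y)
    -- (c) monotonicity (the order on L¹ is the a.e. order)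
    (hmono : ∀ X Y, X ≤ Y → φ X ≤ φ Y)
    -- (d) φ(S) = S
    (hfix : φ S = S)
    -- (e) expectation preserving
    (hexp : ∀ X, ∫ ω, (φ X : Ω → ℝ) ω ∂μ = ∫ ω, (X : Ω → ℝ) ω ∂μ) :
    ∀ X : Lp ℝ 1 μ, AEStronglyMeasurable[sigmaGen S] (X : Ω → ℝ) μ →
      (φ X : Ω → ℝ) =ᵐ[μ] (X : Ω → ℝ) := by
  intro X hX
  set Φ : Lp ℝ 1 μ →+ Lp ℝ 1 μ := AddMonoidHom.mk' φ hadd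
  have hΦmono : Monotone Φ := fun X Y ↦ hmono X Y
  have hΦcont : Continuous Φ := L1.continuous_of_monotone hΦmono hexp
  set V := LinearMap.eqLocus (Φ.toRealLinearMap hΦcont : Lp ℝ 1 μ →ₗ[ℝ] Lp ℝ 1 μ) LinearMap.id
  have hXV : X ∈ V := L1.mem_of_aestronglyMeasurable_sigmaGen (isClosed_eq hΦcont continuous_id)
    (fun _ hY _ hZ ↦ L1.map_inf_eq_of_map_eq_self hΦmono hexp hY hZ)
    (fun t ↦ Lp.ext ((hconst t).trans (Lp.coeFn_const 1 μ t).symm)) hfix hX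
  rw [show φ X = X from hXV]

/-- a map φ : L¹(Ω, 𝓕, ℙ) → L¹(Ω, 𝓖, ℙ) (𝓖 = σ(S)) which is constant
preserving, additive, monotone, fixes S, and preserves expectations, satisfies
φ(X) = X for every 𝓖-measurable X ∈ L¹. -/
theorem condexp_like_map_fixes_measurable
    {Ω : Type*} [MeasurableSpace Ω] {μ : Measure Ω} [IsProbabilityMeasure μ]
    (S : Lp ℝ 1 μ)
    (φ : Lp ℝ 1 μ → Lp ℝ 1 μ)
    -- φ maps into L¹(Ω, σ(S), ℙ)
    (hcod : ∀ X, AEStronglyMeasurable[sigmaGen S] (φ X : Ω → ℝ) μ)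
    -- (a) constant preserving
    (hconst : ∀ t : ℝ, (φ ((memLp_const t).toLp (fun _ => t)) : Ω → ℝ) =ᵐ[μ] fun _ => t)
    -- (b) additivity
    (hadd : ∀ X Y, φ (X + Y) = φ X + φ Y)
    -- (c) monotonicity (the order on L¹ is the a.e. order)
    (hmono : ∀ X Y, X ≤ Y → φ X ≤ φ Y)
    -- (d) φ(S) = S
    (hfix : φ S = S)
    -- (e) expectation preserving
    (hexp : ∀ X, ∫ ω, (φ X : Ω → ℝ) ω ∂μ = ∫ ω, (X : Ω → ℝ) ω ∂μ) :
    ∀ X : Lp ℝ 1 μ, AEStronglyMeasurable[sigmaGen S] (X : Ω → ℝ) μ →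
      (φ X : Ω → ℝ) =ᵐ[μ] (X : Ω → ℝ) :=
  condexp_like_map_fixes_measurable_general S φ hconst hadd hmono hfix hexp
end
end

section
/- If a risk sharing rule A satisfies Axioms AF and RF, then it satisfies Property CP: for every X ∈ 𝒳ⁿ and every i, if Xᵢ = x a.s. for some x ∈ ℝ, then Aᵢ^X = x a.s. In particular, for every X ∈ 𝒳 one has A^{(X, 0, …, 0)} = (X, 0, …, 0), i.e., A₁^{(X,0,…,0)} = X a.s. and Aⱼ^{(X,0,…,0)} = 0 a.s. for all j ≠ 1. -/
open MeasureTheory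

/-! Under RF a component whose risk is a.s. the constant `x` receives an allocation bounded
above by `x`; AF says its mean is `x`, and an integrable function below a constant with the same
integral equals it a.s. For `(X, 0, …, 0)` this makes every allocation but the first vanish, and
the first is then `X` because the allocations add up to the total. -/

theorem essSup_coe_ereal_of_ae_eq_const {α : Type*} [MeasurableSpace α] {μ : Measure α}
    [NeZero μ] {f : α → ℝ} {x : ℝ} (hf : f =ᵐ[μ] fun _ => x) :
    essSup (fun a => (f a : EReal)) μ = x := by
  have hf' : (fun a => (f a : EReal)) =ᵐ[μ] fun _ => (x : EReal) := hf.fun_comp ((↑) : ℝ → EReal)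
  rw [essSup_congr_ae hf', essSup_const']

theorem ae_eq_const_of_ae_le_essSup_of_integral_eq {α : Type*} [MeasurableSpace α]
    {μ : Measure α} [IsFiniteMeasure μ] [NeZero μ] {f g : α → ℝ} {x : ℝ}
    (hf : Integrable f μ) (hle : ∀ᵐ a ∂μ, (f a : EReal) ≤ essSup (fun a => (g a : EReal)) μ)
    (hint : ∫ a, f a ∂μ = ∫ a, g a ∂μ) (hg : g =ᵐ[μ] fun _ => x) :
    f =ᵐ[μ] fun _ => x := by
  have hle_x : f ≤ᵐ[μ] fun _ => x := by
    filter_upwards [hle] with a ha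
    rwa [essSup_coe_ereal_of_ae_eq_const hg, EReal.coe_le_coe_iff] at ha
  rw [← integral_eq_iff_of_ae_le hf (integrable_const x) hle_x, hint]
  exact integral_congr_ae hg

/-- if a risk sharing rule satisfies Axioms AF and RF, then it satisfies
Property CP (constant preserving); in particular A^{(X,0,…,0)} = (X,0,…,0). -/
theorem af_rf_imply_cp
    {Ω : Type*} [MeasurableSpace Ω] {μ : Measure Ω} [IsProbabilityMeasure μ]
    {n : ℕ} (hn : 3 ≤ n)
    (A : (Fin n → Lp ℝ 1 μ) → (Fin n → Lp ℝ 1 μ))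
    (hsum : ∀ X, ∑ i, A X i = ∑ i, X i)
    -- Axiom AF
    (hAF : ∀ X (i : Fin n), ∫ ω, (A X i : Ω → ℝ) ω ∂μ = ∫ ω, (X i : Ω → ℝ) ω ∂μ)
    -- Axiom RF
    (hRF : ∀ X (i : Fin n), ∀ᵐ ω ∂μ, ((A X i : Ω → ℝ) ω : EReal)
        ≤ essSup (fun ω' => ((X i : Ω → ℝ) ω' : EReal)) μ) :
    -- Property CP
    (∀ X (i : Fin n) (x : ℝ), (X i : Ω → ℝ) =ᵐ[μ] (fun _ => x) →
        (A X i : Ω → ℝ) =ᵐ[μ] fun _ => x) ∧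
    -- particular case: A^{(X,0,…,0)} = (X,0,…,0)
    (∀ X : Lp ℝ 1 μ,
      (A (Function.update (fun _ => 0) (⟨0, by omega⟩ : Fin n) X) ⟨0, by omega⟩ : Ω → ℝ)
        =ᵐ[μ] (X : Ω → ℝ) ∧
      ∀ j : Fin n, j ≠ ⟨0, by omega⟩ →
        (A (Function.update (fun _ => 0) (⟨0, by omega⟩ : Fin n) X) j : Ω → ℝ)
          =ᵐ[μ] (0 : Ω → ℝ)) := by
  have cp : ∀ X (i : Fin n) (x : ℝ), (X i : Ω → ℝ) =ᵐ[μ] (fun _ => x) →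
      (A X i : Ω → ℝ) =ᵐ[μ] fun _ => x := fun X i _ hx =>
    ae_eq_const_of_ae_le_essSup_of_integral_eq (L1.integrable_coeFn _) (hRF X i) (hAF X i) hx
  refine ⟨cp, fun X => ?_⟩
  set i₀ : Fin n := ⟨0, by omega⟩
  set X₀ : Fin n → Lp ℝ 1 μ := Function.update (fun _ => 0) i₀ X
  have hzero : ∀ j ≠ i₀, A X₀ j = 0 := fun j hj => by
    refine Lp.eq_zero_iff_ae_eq_zero.2 (cp X₀ j 0 ?_)
    rw [show X₀ j = 0 from Function.update_of_ne hj _ _]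
    exact Lp.coeFn_zero ℝ 1 μ
  have hfirst : A X₀ i₀ = X := by
    rw [← Finset.sum_eq_single_of_mem i₀ (Finset.mem_univ _) fun j _ hj => hzero j hj, hsum,
      Finset.sum_update_of_mem (Finset.mem_univ _)]
    simp
  exact ⟨by rw [hfirst], fun j hj => by rw [hzero j hj]; exact Lp.coeFn_zero ℝ 1 μ⟩
end

section
/- Let 𝒰 : L¹(Ω, 𝓕, ℙ) → ℝ be comonotonic-additive (𝒰(X + Y) = 𝒰(X) + 𝒰(Y) whenever (X, Y) is comonotonic) and superadditive (𝒰(X + Y) ≥ 𝒰(X) + 𝒰(Y) for all X, Y). If X = (X₁, …, Xₙ) ∈ (L¹)ⁿ is a comonotonic random vector and Y = (Y₁, …, Yₙ) ∈ (L¹)ⁿ satisfies Y₁ + ⋯ + Yₙ = X₁ + ⋯ + Xₙ a.s., then ∑_{i=1}^n 𝒰(−Xᵢ) ≥ ∑_{i=1}^n 𝒰(−Yᵢ). -/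
open MeasureTheory

noncomputable section

/-- A random vector (Z₁, …, Zₙ) is comonotonic if there exist nondecreasing functions
g₁, …, gₙ : ℝ → ℝ and a random variable W such that Zᵢ = gᵢ(W) a.s. for each i. -/
def Comonotonic {Ω : Type*} [MeasurableSpace Ω] (μ : MeasureTheory.Measure Ω)
    {n : ℕ} (Z : Fin n → Ω → ℝ) : Prop :=
  ∃ (g : Fin n → ℝ → ℝ) (W : Ω → ℝ),
    (∀ i, Monotone (g i)) ∧ (∀ i, Z i =ᵐ[μ] fun ω => g i (W ω))

/-!
Negating a comonotonic allocation keeps it comonotonic, so comonotonic additivity gives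
`∑ᵢ 𝒰(−Xᵢ) = 𝒰(−∑ᵢ Xᵢ)`, while superadditivity gives `∑ᵢ 𝒰(−Yᵢ) ≤ 𝒰(−∑ᵢ Yᵢ)`; the two right-hand
sides agree because the allocations have the same total.
-/

namespace Comonotonic

variable {Ω : Type*} [MeasurableSpace Ω] {μ : Measure Ω} {n : ℕ} {Z : Fin n → Ω → ℝ}

theorem congr_ae {Z' : Fin n → Ω → ℝ} (hZ : Comonotonic μ Z) (h : ∀ i, Z' i =ᵐ[μ] Z i) :
    Comonotonic μ Z' := by
  obtain ⟨g, W, hg, hZW⟩ := hZ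
  exact ⟨g, W, hg, fun i => (h i).trans (hZW i)⟩

theorem const (c : Fin n → ℝ) : Comonotonic μ (fun i _ => c i) :=
  ⟨fun i _ => c i, 0, fun _ => monotone_const, fun _ => ae_eq_rfl⟩

theorem neg (hZ : Comonotonic μ Z) : Comonotonic μ (fun i => -Z i) := by
  obtain ⟨g, W, hg, hZW⟩ := hZ
  refine ⟨fun i t => -g i (-t), fun ω => -W ω, fun i a b hab => ?_, fun i => ?_⟩
  · exact neg_le_neg (hg i (neg_le_neg hab))
  · filter_upwards [hZW i] with ω hω
    simp [hω]

theorem pair_sum (hZ : Comonotonic μ Z) (a : Fin n) (s : Finset (Fin n)) :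
    Comonotonic μ ![Z a, ∑ i ∈ s, Z i] := by
  obtain ⟨g, W, hg, hZW⟩ := hZ
  refine ⟨![g a, ∑ i ∈ s, g i], W, fun j => ?_, fun j => ?_⟩
  · fin_cases j
    · exact hg a
    · exact fun x y hxy => by simpa using Finset.sum_le_sum fun i _ => hg i hxy
  · fin_cases j
    · exact hZW a
    · filter_upwards [ae_all_iff.2 hZW] with ω hω
      simp [hω]

end Comonotonic

section DualUtility

variable {Ω : Type*} [MeasurableSpace Ω] {μ : Measure Ω}

def ComonotonicAdditive (𝒰 : Lp ℝ 1 μ → ℝ) : Prop :=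
  ∀ X Y : Lp ℝ 1 μ, Comonotonic μ ![(X : Ω → ℝ), (Y : Ω → ℝ)] → 𝒰 (X + Y) = 𝒰 X + 𝒰 Y

theorem ComonotonicAdditive.map_zero {𝒰 : Lp ℝ 1 μ → ℝ} (h𝒰 : ComonotonicAdditive 𝒰) :
    𝒰 0 = 0 := by
  have hzero : Comonotonic μ ![((0 : Lp ℝ 1 μ) : Ω → ℝ), ((0 : Lp ℝ 1 μ) : Ω → ℝ)] :=
    (Comonotonic.const 0).congr_ae fun j => by fin_cases j <;> exact Lp.coeFn_zero ..
  have h := h𝒰 0 0 hzero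
  rw [add_zero] at h
  linarith

theorem ComonotonicAdditive.map_finsetSum {𝒰 : Lp ℝ 1 μ → ℝ} (h𝒰 : ComonotonicAdditive 𝒰)
    {n : ℕ} {Z : Fin n → Lp ℝ 1 μ} (hZ : Comonotonic μ (fun i => (Z i : Ω → ℝ)))
    (s : Finset (Fin n)) : 𝒰 (∑ i ∈ s, Z i) = ∑ i ∈ s, 𝒰 (Z i) := by
  induction s using Finset.induction with
  | empty => simpa using h𝒰.map_zero
  | insert a s ha ih =>
    have hpair : Comonotonic μ ![(Z a : Ω → ℝ), ((∑ i ∈ s, Z i : Lp ℝ 1 μ) : Ω → ℝ)] :=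
      (hZ.pair_sum a s).congr_ae fun j => by
        fin_cases j
        · exact ae_eq_rfl
        · exact Lp.coeFn_finsetSum s Z
    rw [Finset.sum_insert ha, Finset.sum_insert ha, h𝒰 _ _ hpair, ih]

theorem sum_map_le_map_finsetSum_of_superadditive {𝒰 : Lp ℝ 1 μ → ℝ} (h𝒰₀ : 𝒰 0 = 0)
    (hsuper : ∀ X Y : Lp ℝ 1 μ, 𝒰 X + 𝒰 Y ≤ 𝒰 (X + Y)) {ι : Type*} (s : Finset ι)
    (Z : ι → Lp ℝ 1 μ) : ∑ i ∈ s, 𝒰 (Z i) ≤ 𝒰 (∑ i ∈ s, Z i) := by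
  have h := Finset.le_sum_of_subadditive (fun X => -𝒰 X) (by simp [h𝒰₀])
    (fun X Y => by linarith [hsuper X Y]) s Z
  simpa [Finset.sum_neg_distrib] using h

end DualUtility

theorem comonotonic_allocation_dual_utility_optimal_general
    {Ω : Type*} [MeasurableSpace Ω] {μ : Measure Ω}
    {n : ℕ}
    (𝒰 : Lp ℝ 1 μ → ℝ)
    -- comonotonic additivity
    (hcomadd : ∀ X Y : Lp ℝ 1 μ, Comonotonic μ ![(X : Ω → ℝ), (Y : Ω → ℝ)] →
        𝒰 (X + Y) = 𝒰 X + 𝒰 Y)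
    -- superadditivity
    (hsuper : ∀ X Y : Lp ℝ 1 μ, 𝒰 X + 𝒰 Y ≤ 𝒰 (X + Y))
    (X Y : Fin n → Lp ℝ 1 μ)
    (hX : Comonotonic μ (fun i => (X i : Ω → ℝ)))
    (hYX : ∑ i, Y i = ∑ i, X i) :
    ∑ i, 𝒰 (-(Y i)) ≤ ∑ i, 𝒰 (-(X i)) := by
  have h𝒰 : ComonotonicAdditive 𝒰 := hcomadd
  have hnegX : Comonotonic μ (fun i => ((-(X i) : Lp ℝ 1 μ) : Ω → ℝ)) :=
    hX.neg.congr_ae fun i => Lp.coeFn_neg (X i)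
  calc ∑ i, 𝒰 (-(Y i))
      ≤ 𝒰 (∑ i, -(Y i)) := sum_map_le_map_finsetSum_of_superadditive h𝒰.map_zero hsuper _ _
    _ = 𝒰 (∑ i, -(X i)) := by rw [Finset.sum_neg_distrib, Finset.sum_neg_distrib, hYX]
    _ = ∑ i, 𝒰 (-(X i)) := h𝒰.map_finsetSum hnegX _

/-- for a comonotonic-additive and superadditive functional 𝒰 on L¹, any
comonotonic allocation X is Pareto dominant in total dual utility: for every allocation
Y of the same total risk, ∑ᵢ 𝒰(−Xᵢ) ≥ ∑ᵢ 𝒰(−Yᵢ). -/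
theorem comonotonic_allocation_dual_utility_optimal
    {Ω : Type*} [MeasurableSpace Ω] {μ : Measure Ω} [IsProbabilityMeasure μ]
    {n : ℕ}
    (𝒰 : Lp ℝ 1 μ → ℝ)
    -- comonotonic additivity
    (hcomadd : ∀ X Y : Lp ℝ 1 μ, Comonotonic μ ![(X : Ω → ℝ), (Y : Ω → ℝ)] →
        𝒰 (X + Y) = 𝒰 X + 𝒰 Y)
    -- superadditivity
    (hsuper : ∀ X Y : Lp ℝ 1 μ, 𝒰 X + 𝒰 Y ≤ 𝒰 (X + Y))
    (X Y : Fin n → Lp ℝ 1 μ)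
    (hX : Comonotonic μ (fun i => (X i : Ω → ℝ)))
    (hYX : ∑ i, Y i = ∑ i, X i) :
    ∑ i, 𝒰 (-(Y i)) ≤ ∑ i, 𝒰 (-(X i)) :=
  comonotonic_allocation_dual_utility_optimal_general 𝒰 hcomadd hsuper X Y hX hYX
end
end

section
/- Let P be an integrable random variable with P > 0 a.s., let D₁, …, Dₙ ∈ 𝓕 be pairwise disjoint events with union D = D₁ ∪ ⋯ ∪ Dₙ satisfying ℙ(D) > 0, and suppose σ(1_{D₁}, …, 1_{Dₙ}) is independent of σ(P). Then for each i, E[P·1_{Dᵢ} | σ(P·1_D)] = (ℙ(Dᵢ)/ℙ(D)) · P·1_D almost surely. -/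
/-!
Write `Y = P·1_D`. Every `σ(Y)`-set has the form `{Y ∈ S}`, and on a subset `C ⊆ D` it coincides
with `{P ∈ S}`. Hence `∫_{Y ∈ S} P·1_C = ∫_C 1_S(P)·P = ℙ(C)·E[1_S(P)·P]`, the last step by
independence of `C ∈ σ(D₁, …, Dₙ)` from `P`. Taking `C = Dᵢ` and `C = D` shows that `P·1_{Dᵢ}` and
`(ℙ(Dᵢ)/ℙ(D))·Y` have the same integral over every `σ(Y)`-set.
-/

open MeasureTheory ProbabilityTheory

section

variable {Ω E : Type*} {m mΩ : MeasurableSpace Ω} {μ : Measure Ω}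
  [NormedAddCommGroup E] [NormedSpace ℝ E]

lemma setIntegral_preimage_indicator_of_subset {X : Ω → E} {B C : Set Ω} {S : Set E}
    (hs : MeasurableSet (B.indicator X ⁻¹' S)) (hC : MeasurableSet C) (hCB : C ⊆ B) :
    ∫ ω in B.indicator X ⁻¹' S, C.indicator X ω ∂μ = ∫ ω in C, S.indicator id (X ω) ∂μ := by
  rw [← integral_indicator hs, ← integral_indicator hC]
  congr 1
  funext ω
  by_cases hω : ω ∈ C
  · by_cases hS : X ω ∈ S <;> simp [hω, hCB hω, hS]
  · simp [hω]

variable [CompleteSpace E] [MeasurableSpace E] [BorelSpace E] [SecondCountableTopology E]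

theorem condExp_indicator_comap_indicator_of_indep [IsFiniteMeasure μ] (hm : m ≤ mΩ)
    {X : Ω → E} (hX : Measurable X) (hXi : Integrable X μ)
    (hindep : Indep m (MeasurableSpace.comap X inferInstance) μ)
    {A B : Set Ω} (hA : MeasurableSet[m] A) (hB : MeasurableSet[m] B) (hAB : A ⊆ B) :
    μ[A.indicator X | MeasurableSpace.comap (B.indicator X) inferInstance]
      =ᵐ[μ] (μ.real A / μ.real B) • B.indicator X := by
  have hY : Measurable (B.indicator X) := hX.indicator (hm B hB)
  -- if `μ.real B = 0`, the ratio is the junk value `0`, and `μ.real A = 0` makes this harmless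
  have hA_null : μ.real B = 0 → μ.real A = 0 := fun h =>
    le_antisymm (h ▸ measureReal_mono hAB) measureReal_nonneg
  refine (ae_eq_condExp_of_forall_setIntegral_eq hY.comap_le (hXi.indicator (hm A hA))
    (fun s _ _ => ((hXi.indicator (hm B hB)).smul _).integrableOn) ?_
    ((comap_measurable _).stronglyMeasurable.const_smul _).aestronglyMeasurable).symm
  rintro _ ⟨S, hS, rfl⟩ -
  have hS_id : AEStronglyMeasurable (fun x : E => S.indicator id x) (μ.map X) :=
    (measurable_id.indicator hS).aestronglyMeasurable
  rw [Pi.smul_def, integral_smul,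
    setIntegral_preimage_indicator_of_subset (hY hS) (hm A hA) hAB,
    setIntegral_preimage_indicator_of_subset (hY hS) (hm B hB) subset_rfl,
    hindep.setIntegral_eq_smul hm hX.aemeasurable hA hS_id,
    hindep.setIntegral_eq_smul hm hX.aemeasurable hB hS_id, smul_smul,
    div_mul_cancel_of_imp hA_null]

end

theorem condexp_reward_proportional_general
    {Ω : Type*} [MeasurableSpace Ω] {μ : Measure Ω} [IsProbabilityMeasure μ]
    {n : ℕ}
    (P : Ω → ℝ) (hPm : Measurable P) (hPi : Integrable P μ)
    (D : Fin n → Set Ω)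
    (hDm : ∀ i, MeasurableSet (D i))
    (hindep : ProbabilityTheory.Indep (MeasurableSpace.generateFrom (Set.range D))
        (MeasurableSpace.comap P inferInstance) μ)
    (i : Fin n) :
    μ[fun ω => P ω * (D i).indicator 1 ω |
        MeasurableSpace.comap (fun ω => P ω * (⋃ k, D k).indicator 1 ω) inferInstance]
      =ᵐ[μ]
    fun ω => ((μ (D i)).toReal / (μ (⋃ k, D k)).toReal)
        * (P ω * (⋃ k, D k).indicator 1 ω) := by
  have hD : ∀ k, MeasurableSet[MeasurableSpace.generateFrom (Set.range D)] (D k) :=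
    fun k => MeasurableSpace.measurableSet_generateFrom ⟨k, rfl⟩
  have hle : MeasurableSpace.generateFrom (Set.range D) ≤ ‹MeasurableSpace Ω› :=
    MeasurableSpace.generateFrom_le (Set.forall_mem_range.2 hDm)
  have hmul : ∀ s : Set Ω, (fun ω => P ω * s.indicator 1 ω) = s.indicator P := fun s => by
    ext ω; by_cases hω : ω ∈ s <;> simp [hω]
  rw [hmul, hmul]
  filter_upwards [condExp_indicator_comap_indicator_of_indep hle hPm hPi hindep (hD i)
    (MeasurableSet.iUnion hD) (Set.subset_iUnion D i)] with ω hω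
  rw [hω, ← hmul]
  rfl

/-- in the mining pool model, for P > 0 integrable, pairwise disjoint
events D₁, …, Dₙ with union D of positive probability, with σ(1_{D₁}, …, 1_{Dₙ})
independent of σ(P), one has E[P·1_{Dᵢ} | σ(P·1_D)] = (ℙ(Dᵢ)/ℙ(D)) · P·1_D a.s. -/
theorem condexp_reward_proportional
    {Ω : Type*} [MeasurableSpace Ω] {μ : Measure Ω} [IsProbabilityMeasure μ]
    {n : ℕ}
    (P : Ω → ℝ) (hPm : Measurable P) (hPi : Integrable P μ)
    (hPpos : ∀ᵐ ω ∂μ, 0 < P ω)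
    (D : Fin n → Set Ω)
    (hDm : ∀ i, MeasurableSet (D i))
    (hdisj : Pairwise fun i j => Disjoint (D i) (D j))
    (hDpos : 0 < μ (⋃ k, D k))
    (hindep : ProbabilityTheory.Indep (MeasurableSpace.generateFrom (Set.range D))
        (MeasurableSpace.comap P inferInstance) μ)
    (i : Fin n) :
    μ[fun ω => P ω * (D i).indicator 1 ω |
        MeasurableSpace.comap (fun ω => P ω * (⋃ k, D k).indicator 1 ω) inferInstance]
      =ᵐ[μ]
    fun ω => ((μ (D i)).toReal / (μ (⋃ k, D k)).toReal)
        * (P ω * (⋃ k, D k).indicator 1 ω) :=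
  condexp_reward_proportional_general P hPm hPi D hDm hindep i
end
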